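/- Among all connected graphs on n vertices with connectivity at most k (where 1 ≤ k ≤ n−2), the spectral radius is uniquely maximized by K_k + (K_1 ∪ K_{n-k-1}), the graph obtained by joining k edges from k vertices of K_{n-1} to an extra vertex. -/

import Mathlib

open Finset

noncomputable def specRad {n : ℕ} (G : SimpleGraph (Fin n)) : ℝ :=
  letI : DecidableRel G.Adj := Classical.decRel _
  sSup (spectrum ℝ (G.adjMatrix ℝ))

noncomputable def adjMat {n : ℕ} (G : SimpleGraph (Fin n)) : Matrix (Fin n) (Fin n) ℝ :=
  letI : DecidableRel G.Adj := Classical.decRel _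
  G.adjMatrix ℝ

noncomputable def minDeg {n : ℕ} (G : SimpleGraph (Fin n)) : ℕ :=
  letI : DecidableRel G.Adj := Classical.decRel _
  G.minDegree

/-- `x` is a Perron vector of `G`: a positive unit eigenvector for the spectral radius. -/
def IsPerronVector {n : ℕ} (G : SimpleGraph (Fin n)) (x : Fin n → ℝ) : Prop :=
  (∀ i, 0 < x i) ∧ (∑ i, x i ^ 2 = 1) ∧ (adjMat G).mulVec x = specRad G • x

/-- Removing the vertex set `S` disconnects `G`. -/
def Disconnects {n : ℕ} (G : SimpleGraph (Fin n)) (S : Finset (Fin n)) : Prop :=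
  ¬ (G.induce ((↑(Sᶜ) : Set (Fin n)))).Preconnected

/-- `G` is `m`-connected: `G` is the complete graph on `m+1` vertices, or `G` has at least
`m+2` vertices and no vertex cut of size at most `m-1`. -/
def IsKConnected {n : ℕ} (G : SimpleGraph (Fin n)) (m : ℕ) : Prop :=
  (n = m + 1 ∧ G = ⊤) ∨
    (m + 2 ≤ n ∧ ∀ S : Finset (Fin n), S.card ≤ m - 1 → ¬ Disconnects G S)

/-- The graph `K_k + (K_{δ-k+1} ∪ K_{n-δ-1})`: vertices `0,…,k-1` are joined to everything,
vertices `k,…,δ` form one clique and vertices `δ+1,…,n-1` the other. -/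
def Gkdn (k δ n : ℕ) : SimpleGraph (Fin n) where
  Adj a b := a ≠ b ∧ ((a : ℕ) < k ∨ (b : ℕ) < k ∨ ((a : ℕ) ≤ δ ∧ (b : ℕ) ≤ δ) ∨
    (δ < (a : ℕ) ∧ δ < (b : ℕ)))
  symm := ⟨by intro a b h; exact ⟨h.1.symm, by tauto⟩⟩
  loopless := ⟨by intro a h; exact h.1 rfl⟩


open Finset
variable {n : ℕ}

open Matrix

variable {n : ℕ}

noncomputable def lam (A : Matrix (Fin n) (Fin n) ℝ) : ℝ := sSup (spectrum ℝ A)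

lemma spec_eq_range {A : Matrix (Fin n) (Fin n) ℝ} (hA : A.IsHermitian) :
    spectrum ℝ A = Set.range hA.eigenvalues := by
  calc spectrum ℝ A
      = spectrum ℝ ((hA.eigenvectorUnitary : Matrix (Fin n) (Fin n) ℝ) *
        (Matrix.diagonal (RCLike.ofReal ∘ hA.eigenvalues)) *
        (star hA.eigenvectorUnitary : Matrix (Fin n) (Fin n) ℝ)) := congrArg _ hA.spectral_theorem
    _ = spectrum ℝ (Matrix.diagonal (RCLike.ofReal ∘ hA.eigenvalues)) :=
        Unitary.spectrum_star_right_conjugate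
    _ = Set.range hA.eigenvalues := by
        rw [spectrum_diagonal]
        ext x; constructor
        · rintro ⟨i, rfl⟩; exact ⟨i, rfl⟩
        · rintro ⟨i, rfl⟩; exact ⟨i, rfl⟩

lemma lam_eq_sup' {A : Matrix (Fin n) (Fin n) ℝ} (hA : A.IsHermitian) (hn : 0 < n) :
    lam A = Finset.univ.sup'
      (Finset.univ_nonempty_iff.mpr (Fin.pos_iff_nonempty.mp hn)) hA.eigenvalues := by
  have hne : Nonempty (Fin n) := Fin.pos_iff_nonempty.mp hn
  rw [lam, spec_eq_range hA]
  apply le_antisymm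
  · apply csSup_le (Set.range_nonempty _)
    rintro x ⟨i, rfl⟩
    exact Finset.le_sup' _ (mem_univ i)
  · obtain ⟨i, _, hi⟩ := Finset.exists_mem_eq_sup' (s := (univ : Finset (Fin n)))
      (Finset.univ_nonempty_iff.mpr hne) hA.eigenvalues
    rw [hi]
    exact le_csSup (Set.finite_range _).bddAbove ⟨i, rfl⟩

section Rayleigh
variable {A : Matrix (Fin n) (Fin n) ℝ} (hA : A.IsHermitian) (hn : 0 < n)

lemma star_U_eq (hA : A.IsHermitian) :
    star (hA.eigenvectorUnitary : Matrix (Fin n) (Fin n) ℝ)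
      = (hA.eigenvectorUnitary : Matrix (Fin n) (Fin n) ℝ)ᵀ := by
  ext i j
  simp [Matrix.star_eq_conjTranspose, Matrix.conjTranspose_apply]

lemma diag_ofReal (hA : A.IsHermitian) :
    Matrix.diagonal (RCLike.ofReal ∘ hA.eigenvalues) = Matrix.diagonal hA.eigenvalues := rfl

lemma U_mulVec_c (hA : A.IsHermitian) (x : Fin n → ℝ) :
    (hA.eigenvectorUnitary : Matrix (Fin n) (Fin n) ℝ) *ᵥ
      ((star (hA.eigenvectorUnitary : Matrix (Fin n) (Fin n) ℝ)) *ᵥ x) = x := by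
  rw [Matrix.mulVec_mulVec]
  have h : (hA.eigenvectorUnitary : Matrix (Fin n) (Fin n) ℝ) *
      star (hA.eigenvectorUnitary : Matrix (Fin n) (Fin n) ℝ) = 1 :=
    (Unitary.mem_iff.mp hA.eigenvectorUnitary.2).2
  rw [h, Matrix.one_mulVec]

lemma dot_U_mulVec (hA : A.IsHermitian) (x w : Fin n → ℝ) :
    x ⬝ᵥ ((hA.eigenvectorUnitary : Matrix (Fin n) (Fin n) ℝ) *ᵥ w)
      = ((star (hA.eigenvectorUnitary : Matrix (Fin n) (Fin n) ℝ)) *ᵥ x) ⬝ᵥ w := by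
  rw [Matrix.dotProduct_mulVec, star_U_eq hA]
  congr 1
  rw [← Matrix.vecMul_transpose, Matrix.transpose_transpose]

lemma dot_A_mulVec (hA : A.IsHermitian) (x : Fin n → ℝ) :
    x ⬝ᵥ (A *ᵥ x) = ∑ i, hA.eigenvalues i *
      (((star (hA.eigenvectorUnitary : Matrix (Fin n) (Fin n) ℝ)) *ᵥ x) i)^2 := by
  set U := (hA.eigenvectorUnitary : Matrix (Fin n) (Fin n) ℝ)
  set c := (star U) *ᵥ x with hc
  have h1 : A *ᵥ x = U *ᵥ ((Matrix.diagonal hA.eigenvalues) *ᵥ c) := by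
    conv_lhs => rw [hA.spectral_theorem]
    rw [Unitary.conjStarAlgAut_apply, diag_ofReal hA, ← Matrix.mulVec_mulVec, ← Matrix.mulVec_mulVec]
  rw [h1, dot_U_mulVec hA]
  simp only [← hc, dotProduct, Matrix.mulVec_diagonal]
  congr 1; ext i; ring

lemma dot_self_eq (hA : A.IsHermitian) (x : Fin n → ℝ) :
    x ⬝ᵥ x = ∑ i, (((star (hA.eigenvectorUnitary : Matrix (Fin n) (Fin n) ℝ)) *ᵥ x) i)^2 := by
  set U := (hA.eigenvectorUnitary : Matrix (Fin n) (Fin n) ℝ)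
  set c := (star U) *ᵥ x with hc
  have := dot_U_mulVec hA x c
  rw [U_mulVec_c hA] at this
  rw [this]
  simp only [dotProduct]
  congr 1; ext i; ring

lemma rayleigh_le (hA : A.IsHermitian) (hn : 0 < n) (x : Fin n → ℝ) :
    x ⬝ᵥ (A *ᵥ x) ≤ lam A * (x ⬝ᵥ x) := by
  have hne := Finset.univ_nonempty_iff.mpr (Fin.pos_iff_nonempty.mp hn)
  rw [dot_A_mulVec hA, dot_self_eq hA, lam_eq_sup' hA hn, Finset.mul_sum]
  apply Finset.sum_le_sum
  intro i _
  have h1 : hA.eigenvalues i ≤ Finset.univ.sup' hne hA.eigenvalues :=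
    Finset.le_sup' _ (mem_univ i)
  nlinarith [sq_nonneg (((star (hA.eigenvectorUnitary : Matrix (Fin n) (Fin n) ℝ)) *ᵥ x) i)]

lemma rayleigh_eq_imp (hA : A.IsHermitian) (hn : 0 < n) (x : Fin n → ℝ)
    (h : x ⬝ᵥ (A *ᵥ x) = lam A * (x ⬝ᵥ x)) : A *ᵥ x = lam A • x := by
  have hne := Finset.univ_nonempty_iff.mpr (Fin.pos_iff_nonempty.mp hn)
  set U := (hA.eigenvectorUnitary : Matrix (Fin n) (Fin n) ℝ)
  set c := (star U) *ᵥ x with hc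
  set L := lam A with hL
  have hsum : ∑ i, (L - hA.eigenvalues i) * (c i)^2 = 0 := by
    have h2 := dot_A_mulVec hA x
    have h3 := dot_self_eq hA x
    rw [h2, h3, Finset.mul_sum] at h
    have h4 : ∑ i, (L * c i ^ 2 - hA.eigenvalues i * c i ^ 2) = 0 := by
      rw [Finset.sum_sub_distrib, sub_eq_zero]
      exact h.symm
    rw [← h4]
    congr 1; ext i; ring
  have hterm : ∀ i ∈ Finset.univ, (0:ℝ) ≤ (L - hA.eigenvalues i) * (c i)^2 := by
    intro i _
    have h1 : hA.eigenvalues i ≤ L := by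
      rw [hL, lam_eq_sup' hA hn]; exact Finset.le_sup' _ (mem_univ i)
    nlinarith [sq_nonneg (c i)]
  have hzero := (Finset.sum_eq_zero_iff_of_nonneg hterm).mp hsum
  have hDc : (Matrix.diagonal hA.eigenvalues) *ᵥ c = L • c := by
    ext i
    have := hzero i (mem_univ i)
    have : hA.eigenvalues i * c i = L * c i := by
      rcases mul_eq_zero.mp this with h' | h'
      · have he : hA.eigenvalues i = L := by linarith
        rw [he]
      · have : c i = 0 := pow_eq_zero_iff (n := 2) (by norm_num) |>.mp h'
        rw [this, mul_zero, mul_zero]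
    simpa [Matrix.mulVec_diagonal] using this
  have h1 : A *ᵥ x = U *ᵥ ((Matrix.diagonal hA.eigenvalues) *ᵥ c) := by
    conv_lhs => rw [hA.spectral_theorem]
    rw [Unitary.conjStarAlgAut_apply, diag_ofReal hA, ← Matrix.mulVec_mulVec, ← Matrix.mulVec_mulVec]
  rw [h1, hDc, Matrix.mulVec_smul, U_mulVec_c hA]

lemma exists_top_eigenvector (hA : A.IsHermitian) (hn : 0 < n) :
    ∃ v : Fin n → ℝ, (∑ i, v i ^ 2 = 1) ∧ A *ᵥ v = lam A • v := by
  have hne := Finset.univ_nonempty_iff.mpr (Fin.pos_iff_nonempty.mp hn)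
  obtain ⟨i₀, _, hi₀⟩ := Finset.exists_mem_eq_sup' hne hA.eigenvalues
  refine ⟨⇑(hA.eigenvectorBasis i₀), ?_, ?_⟩
  · have hnorm : ‖hA.eigenvectorBasis i₀‖ = 1 := hA.eigenvectorBasis.orthonormal.1 i₀
    rw [EuclideanSpace.norm_eq] at hnorm
    have h2 : ∑ i, ‖hA.eigenvectorBasis i₀ i‖ ^ 2 = 1 := by
      have := congrArg (· ^ 2) hnorm
      simpa [Real.sq_sqrt (Finset.sum_nonneg fun i _ => sq_nonneg _)] using this
    rw [← h2]
    apply Finset.sum_congr rfl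
    intro i _
    rw [Real.norm_eq_abs, sq_abs]
  · rw [hA.mulVec_eigenvectorBasis, lam_eq_sup' hA hn, ← hi₀]

end Rayleigh

section GraphLemmas
variable {G : SimpleGraph (Fin n)}

lemma specRad_eq_lam (G : SimpleGraph (Fin n)) : specRad G = lam (adjMat G) := rfl

lemma adjMat_of_adj {G : SimpleGraph (Fin n)} {i j : Fin n} (h : G.Adj i j) :
    adjMat G i j = 1 := by simp [adjMat, h]

lemma adjMat_of_not_adj {G : SimpleGraph (Fin n)} {i j : Fin n} (h : ¬ G.Adj i j) :
    adjMat G i j = 0 := by simp [adjMat, h]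

lemma adjMat_herm (G : SimpleGraph (Fin n)) : (adjMat G).IsHermitian := by
  ext i j
  simp only [Matrix.conjTranspose_apply, star_trivial]
  by_cases h : G.Adj j i
  · rw [adjMat_of_adj h, adjMat_of_adj h.symm]
  · rw [adjMat_of_not_adj h, adjMat_of_not_adj (fun hh => h hh.symm)]

lemma adjMat_nonneg (G : SimpleGraph (Fin n)) (i j : Fin n) : 0 ≤ adjMat G i j := by
  by_cases h : G.Adj i j
  · rw [adjMat_of_adj h]; norm_num
  · rw [adjMat_of_not_adj h]

lemma adjMat_le_of_le {G H : SimpleGraph (Fin n)} (hle : ∀ i j, G.Adj i j → H.Adj i j)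
    (i j : Fin n) : adjMat G i j ≤ adjMat H i j := by
  by_cases h : G.Adj i j
  · rw [adjMat_of_adj h, adjMat_of_adj (hle _ _ h)]
  · rw [adjMat_of_not_adj h]; exact adjMat_nonneg H i j

lemma dot_adjMat (G : SimpleGraph (Fin n)) (x : Fin n → ℝ) :
    x ⬝ᵥ (adjMat G *ᵥ x) = ∑ i, ∑ j, adjMat G i j * (x i * x j) := by
  simp only [dotProduct, Matrix.mulVec, dotProduct, Finset.mul_sum]
  congr 1; ext i; congr 1; ext j; ring

lemma dot_eq_sum_sq (x : Fin n → ℝ) : x ⬝ᵥ x = ∑ i, x i ^ 2 := by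
  simp only [dotProduct, sq]

lemma exists_nonneg_eigenvector (G : SimpleGraph (Fin n)) (hn : 0 < n) :
    ∃ x : Fin n → ℝ, (∀ i, 0 ≤ x i) ∧ (∑ i, x i ^ 2 = 1) ∧
      adjMat G *ᵥ x = specRad G • x := by
  obtain ⟨v, hv1, hv2⟩ := exists_top_eigenvector (adjMat_herm G) hn
  set L := lam (adjMat G) with hL
  refine ⟨fun i => |v i|, fun i => abs_nonneg _, by simp [sq_abs, hv1], ?_⟩
  set x : Fin n → ℝ := fun i => |v i| with hx
  have hxx : x ⬝ᵥ x = 1 := by rw [dot_eq_sum_sq]; simp [hx, sq_abs, hv1]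
  have hvv : v ⬝ᵥ v = 1 := by rw [dot_eq_sum_sq, hv1]
  have hvAv : v ⬝ᵥ (adjMat G *ᵥ v) = L := by
    rw [hv2, dotProduct_smul, smul_eq_mul, hvv, mul_one]
  have hle : L ≤ x ⬝ᵥ (adjMat G *ᵥ x) := by
    rw [← hvAv, dot_adjMat, dot_adjMat]
    apply Finset.sum_le_sum; intro i _
    apply Finset.sum_le_sum; intro j _
    have h2 : v i * v j ≤ x i * x j := by
      calc v i * v j ≤ |v i * v j| := le_abs_self _
        _ = x i * x j := abs_mul _ _
    exact mul_le_mul_of_nonneg_left h2 (adjMat_nonneg G i j)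
  have hge : x ⬝ᵥ (adjMat G *ᵥ x) ≤ L * (x ⬝ᵥ x) := rayleigh_le (adjMat_herm G) hn x
  rw [hxx, mul_one] at hge
  have heq : x ⬝ᵥ (adjMat G *ᵥ x) = L * (x ⬝ᵥ x) := by rw [hxx, mul_one]; linarith
  exact rayleigh_eq_imp (adjMat_herm G) hn x heq

lemma eigenvector_pos_of_connected (hG : G.Connected) (x : Fin n → ℝ)
    (hx0 : ∀ i, 0 ≤ x i) (hx1 : ∑ i, x i ^ 2 = 1)
    (hx2 : adjMat G *ᵥ x = specRad G • x) : ∀ i, 0 < x i := by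
  have spread : ∀ i j : Fin n, G.Adj i j → x i = 0 → x j = 0 := by
    intro i j hadj hxi
    have h1 : (adjMat G *ᵥ x) i = 0 := by rw [hx2]; simp [hxi]
    have h2 : ∑ k, adjMat G i k * x k = 0 := by
      simpa [Matrix.mulVec, dotProduct] using h1
    have h3 : ∀ k ∈ Finset.univ, (0:ℝ) ≤ adjMat G i k * x k :=
      fun k _ => mul_nonneg (adjMat_nonneg G i k) (hx0 k)
    have h4 := (Finset.sum_eq_zero_iff_of_nonneg h3).mp h2 j (Finset.mem_univ j)
    rw [adjMat_of_adj hadj, one_mul] at h4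
    exact h4
  have reach : ∀ i j : Fin n, G.Reachable i j → x i = 0 → x j = 0 := by
    intro i j hr
    obtain ⟨w⟩ := hr
    induction w with
    | nil => exact id
    | cons h p ih => intro h0; exact ih (spread _ _ h h0)
  have hex : ∃ i, x i ≠ 0 := by
    by_contra hc
    push_neg at hc
    rw [Finset.sum_eq_zero (fun i _ => by rw [hc i]; ring)] at hx1
    norm_num at hx1
  obtain ⟨i0, hi0⟩ := hex
  intro j
  rcases lt_or_eq_of_le (hx0 j) with h | h
  · exact h
  · exact absurd (reach j i0 (hG.preconnected j i0) h.symm) hi0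

lemma specRad_le_of_le {G H : SimpleGraph (Fin n)} (hn : 0 < n)
    (hle : ∀ i j, G.Adj i j → H.Adj i j) : specRad G ≤ specRad H := by
  obtain ⟨x, hx0, hx1, hx2⟩ := exists_nonneg_eigenvector G hn
  have hxx : x ⬝ᵥ x = 1 := by rw [dot_eq_sum_sq, hx1]
  have h1 : specRad G = x ⬝ᵥ (adjMat G *ᵥ x) := by
    rw [hx2, dotProduct_smul, smul_eq_mul, hxx, mul_one]
  have h2 : x ⬝ᵥ (adjMat G *ᵥ x) ≤ x ⬝ᵥ (adjMat H *ᵥ x) := by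
    rw [dot_adjMat, dot_adjMat]
    apply Finset.sum_le_sum; intro i _
    apply Finset.sum_le_sum; intro j _
    exact mul_le_mul_of_nonneg_right (adjMat_le_of_le hle i j)
      (mul_nonneg (hx0 i) (hx0 j))
  have h3 : x ⬝ᵥ (adjMat H *ᵥ x) ≤ specRad H * (x ⬝ᵥ x) :=
    rayleigh_le (adjMat_herm H) hn x
  rw [hxx, mul_one] at h3
  linarith

lemma specRad_lt_of_lt {G H : SimpleGraph (Fin n)} (hn : 0 < n) (hH : H.Connected)
    (hle : ∀ i j, G.Adj i j → H.Adj i j) (u v : Fin n) (huv : H.Adj u v)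
    (hnuv : ¬ G.Adj u v) : specRad G < specRad H := by
  rcases lt_or_eq_of_le (specRad_le_of_le hn hle) with h | h
  · exact h
  · exfalso
    obtain ⟨x, hx0, hx1, hx2⟩ := exists_nonneg_eigenvector G hn
    have hxx : x ⬝ᵥ x = 1 := by rw [dot_eq_sum_sq, hx1]
    have h1 : specRad G = x ⬝ᵥ (adjMat G *ᵥ x) := by
      rw [hx2, dotProduct_smul, smul_eq_mul, hxx, mul_one]
    have h3 : x ⬝ᵥ (adjMat H *ᵥ x) ≤ specRad H * (x ⬝ᵥ x) :=
      rayleigh_le (adjMat_herm H) hn x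
    rw [hxx, mul_one] at h3
    have hgap : x ⬝ᵥ (adjMat G *ᵥ x) < x ⬝ᵥ (adjMat H *ᵥ x) := by
      rw [dot_adjMat, dot_adjMat]
      apply Finset.sum_lt_sum
      · intro i _
        apply Finset.sum_le_sum; intro j _
        exact mul_le_mul_of_nonneg_right (adjMat_le_of_le hle i j)
          (mul_nonneg (hx0 i) (hx0 j))
      · refine ⟨u, Finset.mem_univ u, ?_⟩
        apply Finset.sum_lt_sum
        · intro j _
          exact mul_le_mul_of_nonneg_right (adjMat_le_of_le hle u j)
            (mul_nonneg (hx0 u) (hx0 j))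
        · refine ⟨v, Finset.mem_univ v, ?_⟩
          rw [adjMat_of_adj huv, adjMat_of_not_adj hnuv, zero_mul, one_mul]
          have heqH : x ⬝ᵥ (adjMat H *ᵥ x) = specRad H * (x ⬝ᵥ x) := by
            rw [hxx, mul_one]
            have hgeH : specRad H ≤ x ⬝ᵥ (adjMat H *ᵥ x) := by
              rw [← h, h1]
              rw [dot_adjMat, dot_adjMat]
              apply Finset.sum_le_sum; intro i _
              apply Finset.sum_le_sum; intro j _
              exact mul_le_mul_of_nonneg_right (adjMat_le_of_le hle i j)
                (mul_nonneg (hx0 i) (hx0 j))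
            linarith
          have hxeigH : adjMat H *ᵥ x = specRad H • x :=
            rayleigh_eq_imp (adjMat_herm H) hn x heqH
          have hxpos := eigenvector_pos_of_connected hH x hx0 hx1 hxeigH
          exact mul_pos (hxpos u) (hxpos v)
    have heqH : x ⬝ᵥ (adjMat H *ᵥ x) = specRad H := by
      have hgeH : specRad H ≤ x ⬝ᵥ (adjMat H *ᵥ x) := by
        rw [← h, h1]; linarith [hgap]
      linarith
    rw [heqH, ← h, h1] at hgap
    linarith

end GraphLemmas

section Iso

lemma spectrum_submatrix (A : Matrix (Fin n) (Fin n) ℝ) (σ : Fin n ≃ Fin n) :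
    spectrum ℝ (A.submatrix σ σ) = spectrum ℝ A := by
  ext μ
  rw [spectrum.mem_iff, spectrum.mem_iff]
  have key : algebraMap ℝ (Matrix (Fin n) (Fin n) ℝ) μ - A.submatrix σ σ
      = (algebraMap ℝ (Matrix (Fin n) (Fin n) ℝ) μ - A).submatrix σ σ := by
    ext i j
    simp only [Matrix.sub_apply, Matrix.submatrix_apply, Matrix.algebraMap_matrix_apply]
    congr 1
    by_cases h : i = j
    · rw [if_pos h, if_pos (by rw [h])]
    · rw [if_neg h, if_neg (fun hh => h (σ.injective hh))]
  rw [key]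
  rw [Matrix.isUnit_iff_isUnit_det, Matrix.isUnit_iff_isUnit_det,
    Matrix.det_submatrix_equiv_self]

lemma specRad_iso {G H : SimpleGraph (Fin n)} (e : G ≃g H) : specRad G = specRad H := by
  have hsub : adjMat G = (adjMat H).submatrix ⇑e.toEquiv ⇑e.toEquiv := by
    ext i j
    rw [Matrix.submatrix_apply]
    have hadj : H.Adj (e.toEquiv i) (e.toEquiv j) ↔ G.Adj i j := e.map_adj_iff
    by_cases h : G.Adj i j
    · rw [adjMat_of_adj h, adjMat_of_adj (hadj.mpr h)]
    · rw [adjMat_of_not_adj h, adjMat_of_not_adj (fun hh => h (hadj.mp hh))]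
  show sSup (spectrum ℝ (adjMat G)) = sSup (spectrum ℝ (adjMat H))
  rw [hsub, spectrum_submatrix (adjMat H) e.toEquiv]

end Iso

section GkdnBasic

lemma Gkdn_connected {k δ : ℕ} (hk : 1 ≤ k) (hn : 0 < n) : (Gkdn k δ n).Connected := by
  have hne : Nonempty (Fin n) := Fin.pos_iff_nonempty.mp hn
  have h0 : ((⟨0, hn⟩ : Fin n) : ℕ) < k := hk
  have to0 : ∀ a : Fin n, (Gkdn k δ n).Reachable a ⟨0, hn⟩ := by
    intro a
    by_cases h : a = ⟨0, hn⟩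
    · rw [h]
    · exact SimpleGraph.Adj.reachable ⟨h, Or.inr (Or.inl h0)⟩
  exact { preconnected := fun a b => (to0 a).trans (to0 b).symm, nonempty := hne }

end GkdnBasic

section Compare

variable {k δ : ℕ}

lemma Gkdn_not_adj_iff {i j : Fin n} (hkδ : k ≤ δ) (hij : i ≠ j) :
    ¬ (Gkdn k δ n).Adj i j ↔
      ((k ≤ (i:ℕ) ∧ (i:ℕ) ≤ δ) ∧ δ < (j:ℕ)) ∨ (δ < (i:ℕ) ∧ (k ≤ (j:ℕ) ∧ (j:ℕ) ≤ δ)) := by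
  constructor
  · intro h
    simp only [Gkdn, not_and, not_or] at h
    have h2 := h hij
    omega
  · intro h hadj
    obtain ⟨-, h2⟩ := hadj
    omega

lemma ite_or_split (Aa Bb : Prop) [Decidable Aa] [Decidable Bb] (t : ℝ) (h : ¬(Aa ∧ Bb)) :
    (if Aa ∨ Bb then t else 0) = (if Aa then t else 0) + (if Bb then t else 0) := by
  by_cases hA : Aa
  · have hB : ¬ Bb := fun hB => h ⟨hA, hB⟩
    simp [hA, hB]
  · by_cases hB : Bb <;> simp [hA, hB]

lemma sum_prod_ite (x : Fin n → ℝ) (S T : Finset (Fin n)) :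
    ∑ i, ∑ j, (if i ∈ S ∧ j ∈ T then x i * x j else 0)
      = (∑ i ∈ S, x i) * (∑ j ∈ T, x j) := by
  have hinner : ∀ i : Fin n, ∑ j, (if i ∈ S ∧ j ∈ T then x i * x j else 0)
      = if i ∈ S then x i * ∑ j ∈ T, x j else 0 := by
    intro i
    by_cases hi : i ∈ S
    · simp only [hi, true_and, if_pos]
      rw [Finset.mul_sum, Finset.sum_ite_mem, Finset.univ_inter]
    · simp [hi]
  rw [Finset.sum_congr rfl (fun i _ => hinner i), Finset.sum_ite_mem, Finset.univ_inter,
    Finset.sum_mul]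

lemma compare_lemma (hk : 1 ≤ k) (hkδ : k < δ) (hδn : δ + 3 ≤ n) :
    specRad (Gkdn k δ n) < specRad (Gkdn k k n) := by
  have hn : 0 < n := by omega
  have hkn : k < n := by omega
  set Gδ := Gkdn k δ n with hGδ
  set Gk := Gkdn k k n with hGk
  have hδconn : Gδ.Connected := Gkdn_connected hk hn
  obtain ⟨x, hx0, hx1, hx2⟩ := exists_nonneg_eigenvector Gδ hn
  have hxpos := eigenvector_pos_of_connected hδconn x hx0 hx1 hx2
  have hxx : x ⬝ᵥ x = 1 := by rw [dot_eq_sum_sq, hx1]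
  have hLδ : specRad Gδ = x ⬝ᵥ (adjMat Gδ *ᵥ x) := by
    rw [hx2, dotProduct_smul, smul_eq_mul, hxx, mul_one]
  -- the finsets
  set P : Finset (Fin n) := Finset.univ.filter (fun i => k ≤ (i:ℕ) ∧ (i:ℕ) ≤ δ) with hP
  set Q : Finset (Fin n) := Finset.univ.filter (fun i => δ < (i:ℕ)) with hQ
  set R : Finset (Fin n) := Finset.univ.filter (fun i => k ≤ (i:ℕ)) with hR
  have hRne : R.Nonempty := ⟨⟨k, hkn⟩, by
    rw [hR, Finset.mem_filter]; exact ⟨Finset.mem_univ _, le_rfl⟩⟩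
  obtain ⟨u, huR, humin⟩ := Finset.exists_min_image R x hRne
  have huk : k ≤ (u:ℕ) := by simpa [hR] using huR
  set κ : Fin n := ⟨k, hkn⟩ with hκ
  have hκv : (κ:ℕ) = k := rfl
  have heqκ : ∀ w : Fin n, w = κ ↔ (w:ℕ) = k := by
    intro w; rw [Fin.ext_iff, hκv]
  set σ : Equiv.Perm (Fin n) := Equiv.swap κ u with hσ
  set z : Fin n → ℝ := fun i => x (σ i) with hz
  have hσσ : ∀ w, σ (σ w) = w := fun w => Equiv.swap_apply_self _ _ _
  have hz1 : ∑ i, z i ^ 2 = 1 := by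
    rw [hz, ← hx1]
    exact Equiv.sum_comp σ (fun i => x i ^ 2)
  have hzz : z ⬝ᵥ z = 1 := by rw [dot_eq_sum_sq, hz1]
  have hzb : z ⬝ᵥ (adjMat Gk *ᵥ z) ≤ specRad Gk := by
    have := rayleigh_le (adjMat_herm Gk) hn z
    rwa [hzz, mul_one] at this
  -- reindex
  have hreindex : z ⬝ᵥ (adjMat Gk *ᵥ z) =
      ∑ i, ∑ j, adjMat Gk (σ i) (σ j) * (x i * x j) := by
    rw [dot_adjMat]
    have h1 : ∀ i : Fin n, ∑ j, adjMat Gk (σ i) (σ j) * (x i * x j)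
        = ∑ j, adjMat Gk (σ i) j * (z (σ i) * z j) := by
      intro i
      rw [← Equiv.sum_comp σ (fun j => adjMat Gk (σ i) j * (z (σ i) * z j))]
      apply Finset.sum_congr rfl
      intro j _
      rw [hz]
      simp only [hσσ]
    rw [Finset.sum_congr rfl (fun i (_ : i ∈ Finset.univ) => h1 i)]
    rw [← Equiv.sum_comp σ (fun i => ∑ j, adjMat Gk i j * (z i * z j))]
  -- abbreviations for sums
  set p : ℝ := ∑ i ∈ P, x i with hp
  set q : ℝ := ∑ i ∈ Q, x i with hq
  set m : ℝ := x u with hm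
  -- swap value characterization
  have hswap_val : ∀ j : Fin n, (k < ((σ j : Fin n) : ℕ)) ↔ (k ≤ (j:ℕ) ∧ j ≠ u) := by
    intro j
    by_cases h1 : j = κ
    · subst h1
      rw [hσ, Equiv.swap_apply_left]
      constructor
      · intro h
        refine ⟨by omega, fun he => ?_⟩
        rw [← he] at h
        omega
      · rintro ⟨-, hne⟩
        have h2 : (u:ℕ) ≠ k := fun hh => hne ((heqκ u).mpr hh).symm
        omega
    · by_cases h2 : j = u
      · subst h2
        rw [hσ, Equiv.swap_apply_right]
        constructor
        · intro h; rw [hκv] at h; omega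
        · rintro ⟨-, hne⟩; exact absurd rfl hne
      · rw [hσ, Equiv.swap_apply_of_ne_of_ne h1 h2]
        have h3 : (j:ℕ) ≠ k := fun hh => h1 ((heqκ j).mpr hh)
        constructor
        · intro h; exact ⟨by omega, h2⟩
        · rintro ⟨h, -⟩; omega
  have hσκ : ∀ i : Fin n, σ i = κ ↔ i = u := by
    intro i
    constructor
    · intro h
      have h2 := congrArg σ h
      rw [hσσ] at h2
      rw [h2, hσ, Equiv.swap_apply_left]
    · intro h; rw [h, hσ, Equiv.swap_apply_right]
  -- pulled-back non-adjacency characterization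
  have hnk : ∀ i j : Fin n, i ≠ j →
      (¬ Gk.Adj (σ i) (σ j) ↔ (i = u ∧ (j ∈ R.erase u)) ∨ (j = u ∧ (i ∈ R.erase u))) := by
    intro i j hij
    have hσij : σ i ≠ σ j := fun h => hij (σ.injective h)
    rw [hGk, Gkdn_not_adj_iff (le_refl k) hσij]
    have hκval : ∀ w : Fin n, (k ≤ (w:ℕ) ∧ (w:ℕ) ≤ k) ↔ w = κ := by
      intro w
      rw [heqκ w]
      omega
    rw [hκval, hκval, hσκ, hσκ, hswap_val, hswap_val]
    simp only [Finset.mem_erase, hR, Finset.mem_filter, Finset.mem_univ, true_and]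
    constructor
    · rintro (⟨h1, h2⟩ | ⟨h1, h2⟩)
      · exact Or.inl ⟨h1, h2.2, h2.1⟩
      · exact Or.inr ⟨h2, h1.2, h1.1⟩
    · rintro (⟨h1, h2, h3⟩ | ⟨h1, h2, h3⟩)
      · exact Or.inl ⟨h1, h3, h2⟩
      · exact Or.inr ⟨⟨h3, h2⟩, h1⟩
  -- non-adjacency characterization for Gδ
  have hnδ : ∀ i j : Fin n, i ≠ j →
      (¬ Gδ.Adj i j ↔ (i ∈ P ∧ j ∈ Q) ∨ (i ∈ Q ∧ j ∈ P)) := by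
    intro i j hij
    rw [hGδ, Gkdn_not_adj_iff (le_of_lt hkδ) hij]
    simp only [hP, hQ, Finset.mem_filter, Finset.mem_univ, true_and]
  -- pointwise identity
  have hpoint : ∀ i j : Fin n,
      adjMat Gk (σ i) (σ j) * (x i * x j) - adjMat Gδ i j * (x i * x j)
      = ((if (i ∈ P ∧ j ∈ Q) ∨ (i ∈ Q ∧ j ∈ P) then x i * x j else 0)
        - (if (i = u ∧ j ∈ R.erase u) ∨ (j = u ∧ i ∈ R.erase u) then x i * x j else 0)) := by
    intro i j
    by_cases hij : i = j
    · subst hij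
      rw [adjMat_of_not_adj (Gk.loopless.irrefl (σ i)), adjMat_of_not_adj (Gδ.loopless.irrefl i)]
      have c1 : ¬ ((i ∈ P ∧ i ∈ Q) ∨ (i ∈ Q ∧ i ∈ P)) := by
        simp only [hP, hQ, Finset.mem_filter, Finset.mem_univ, true_and]
        omega
      have c2 : ¬ ((i = u ∧ i ∈ R.erase u) ∨ (i = u ∧ i ∈ R.erase u)) := by
        rintro (⟨h1, h2⟩ | ⟨h1, h2⟩) <;> exact (Finset.mem_erase.mp h2).1 h1
      rw [if_neg c1, if_neg c2]
      ring
    · by_cases h1 : Gδ.Adj i j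
      · have h1' : ¬ ((i ∈ P ∧ j ∈ Q) ∨ (i ∈ Q ∧ j ∈ P)) := fun hc => (hnδ i j hij).mpr hc h1
        by_cases h2 : Gk.Adj (σ i) (σ j)
        · have h2' : ¬ _ := fun hc => (hnk i j hij).mpr hc h2
          rw [adjMat_of_adj h1, adjMat_of_adj h2, if_neg h1', if_neg h2']
          ring
        · have h2' := (hnk i j hij).mp h2
          rw [adjMat_of_adj h1, adjMat_of_not_adj h2, if_neg h1', if_pos h2']
          ring
      · have h1' := (hnδ i j hij).mp h1
        by_cases h2 : Gk.Adj (σ i) (σ j)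
        · have h2' : ¬ _ := fun hc => (hnk i j hij).mpr hc h2
          rw [adjMat_of_not_adj h1, adjMat_of_adj h2, if_pos h1', if_neg h2']
          ring
        · have h2' := (hnk i j hij).mp h2
          rw [adjMat_of_not_adj h1, adjMat_of_not_adj h2, if_pos h1', if_pos h2']
          ring
  -- the difference of quadratic forms
  have hdiff : z ⬝ᵥ (adjMat Gk *ᵥ z) - x ⬝ᵥ (adjMat Gδ *ᵥ x)
      = (∑ i, ∑ j, (if (i ∈ P ∧ j ∈ Q) ∨ (i ∈ Q ∧ j ∈ P) then x i * x j else 0))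
      - (∑ i, ∑ j, (if (i = u ∧ j ∈ R.erase u) ∨ (j = u ∧ i ∈ R.erase u)
          then x i * x j else 0)) := by
    rw [hreindex, dot_adjMat, ← Finset.sum_sub_distrib]
    rw [show (∑ i, ∑ j, (if (i ∈ P ∧ j ∈ Q) ∨ (i ∈ Q ∧ j ∈ P) then x i * x j else 0))
      - (∑ i, ∑ j, (if (i = u ∧ j ∈ R.erase u) ∨ (j = u ∧ i ∈ R.erase u)
          then x i * x j else 0))
      = ∑ i, ((∑ j, (if (i ∈ P ∧ j ∈ Q) ∨ (i ∈ Q ∧ j ∈ P) then x i * x j else 0))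
        - (∑ j, (if (i = u ∧ j ∈ R.erase u) ∨ (j = u ∧ i ∈ R.erase u)
            then x i * x j else 0))) from (Finset.sum_sub_distrib _ _).symm]
    apply Finset.sum_congr rfl
    intro i _
    rw [← Finset.sum_sub_distrib, ← Finset.sum_sub_distrib]
    apply Finset.sum_congr rfl
    intro j _
    exact hpoint i j
  -- compute the first sum: 2 p q
  have hsum1 : (∑ i, ∑ j, (if (i ∈ P ∧ j ∈ Q) ∨ (i ∈ Q ∧ j ∈ P) then x i * x j else 0))
      = p * q + q * p := by
    have hsplit : ∀ i j : Fin n, (if (i ∈ P ∧ j ∈ Q) ∨ (i ∈ Q ∧ j ∈ P) then x i * x j else 0)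
        = (if i ∈ P ∧ j ∈ Q then x i * x j else 0) + (if i ∈ Q ∧ j ∈ P then x i * x j else 0) := by
      intro i j
      apply ite_or_split
      rintro ⟨⟨h1, -⟩, ⟨h2, -⟩⟩
      simp only [hP, hQ, Finset.mem_filter, Finset.mem_univ, true_and] at h1 h2
      omega
    simp only [hsplit, Finset.sum_add_distrib]
    rw [sum_prod_ite x P Q, sum_prod_ite x Q P]
  -- compute the second sum
  set s : ℝ := ∑ j ∈ R.erase u, x j with hs
  have hsum2 : (∑ i, ∑ j, (if (i = u ∧ j ∈ R.erase u) ∨ (j = u ∧ i ∈ R.erase u)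
      then x i * x j else 0)) = m * s + s * m := by
    have hsplit : ∀ i j : Fin n,
        (if (i = u ∧ j ∈ R.erase u) ∨ (j = u ∧ i ∈ R.erase u) then x i * x j else 0)
        = (if i = u ∧ j ∈ R.erase u then x i * x j else 0)
          + (if j = u ∧ i ∈ R.erase u then x i * x j else 0) := by
      intro i j
      apply ite_or_split
      rintro ⟨⟨h1, -⟩, ⟨-, h2⟩⟩
      exact (Finset.mem_erase.mp h2).1 h1
    simp only [hsplit, Finset.sum_add_distrib]
    congr 1
    · have hinner : ∀ i : Fin n, ∑ j, (if i = u ∧ j ∈ R.erase u then x i * x j else 0)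
          = if i = u then x i * s else 0 := by
        intro i
        by_cases hi : i = u
        · simp only [hi, true_and, if_pos]
          rw [hs, Finset.mul_sum, Finset.sum_ite_mem, Finset.univ_inter]
        · simp [hi]
      rw [Finset.sum_congr rfl (fun i (_ : i ∈ Finset.univ) => hinner i)]
      rw [Finset.sum_ite_eq' Finset.univ u (fun i => x i * s)]
      simp [hm]
    · have hinner : ∀ i : Fin n, ∑ j, (if j = u ∧ i ∈ R.erase u then x i * x j else 0)
          = if i ∈ R.erase u then x i * m else 0 := by
        intro i
        by_cases hi : i ∈ R.erase u
        · simp only [hi, and_true, if_pos]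
          rw [Finset.sum_ite_eq' Finset.univ u (fun j => x i * x j)]
          simp [hm]
        · simp [hi]
      rw [Finset.sum_congr rfl (fun i (_ : i ∈ Finset.univ) => hinner i)]
      rw [Finset.sum_ite_mem, Finset.univ_inter, Finset.sum_mul]
  -- relations between the sums
  have hRPQ : R = P ∪ Q := by
    ext i
    simp only [hR, hP, hQ, Finset.mem_union, Finset.mem_filter, Finset.mem_univ, true_and]
    omega
  have hPQdisj : Disjoint P Q := by
    rw [Finset.disjoint_left]
    intro a ha hb
    simp only [hP, hQ, Finset.mem_filter, Finset.mem_univ, true_and] at ha hb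
    omega
  have hr : ∑ i ∈ R, x i = p + q := by
    rw [hRPQ, Finset.sum_union hPQdisj]
  have hsr : s = p + q - m := by
    have := Finset.add_sum_erase R x huR
    rw [hr] at this
    rw [hs]
    linarith [this]
  -- lower bounds
  have ha1 : (⟨k, by omega⟩ : Fin n) ∈ P := by
    rw [hP, Finset.mem_filter]
    exact ⟨Finset.mem_univ _, ⟨(le_rfl : k ≤ k), (by omega : k ≤ δ)⟩⟩
  have ha2 : (⟨k+1, by omega⟩ : Fin n) ∈ P := by
    rw [hP, Finset.mem_filter]
    exact ⟨Finset.mem_univ _, ⟨(by omega : k ≤ k+1), (by omega : k+1 ≤ δ)⟩⟩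
  have hb1 : (⟨δ+1, by omega⟩ : Fin n) ∈ Q := by
    rw [hQ, Finset.mem_filter]
    exact ⟨Finset.mem_univ _, (by omega : δ < δ+1)⟩
  have hb2 : (⟨δ+2, by omega⟩ : Fin n) ∈ Q := by
    rw [hQ, Finset.mem_filter]
    exact ⟨Finset.mem_univ _, (by omega : δ < δ+2)⟩
  have hpair_le : ∀ (a b : Fin n) (T : Finset (Fin n)), a ∈ T → b ∈ T → a ≠ b →
      x a + x b ≤ ∑ i ∈ T, x i := by
    intro a b T haT hbT hab
    have hsub : ({a, b} : Finset (Fin n)) ⊆ T := by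
      intro w hw
      rcases Finset.mem_insert.mp hw with h | h
      · rwa [h]
      · rw [Finset.mem_singleton.mp h]; exact hbT
    calc x a + x b = ∑ i ∈ ({a, b} : Finset (Fin n)), x i := (Finset.sum_pair hab).symm
      _ ≤ ∑ i ∈ T, x i := Finset.sum_le_sum_of_subset_of_nonneg hsub
          (fun i _ _ => hx0 i)
  have hane : (⟨k, by omega⟩ : Fin n) ≠ (⟨k+1, by omega⟩ : Fin n) :=
    Fin.ne_of_val_ne (show k ≠ k + 1 by omega)
  have hbne : (⟨δ+1, by omega⟩ : Fin n) ≠ (⟨δ+2, by omega⟩ : Fin n) :=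
    Fin.ne_of_val_ne (show δ + 1 ≠ δ + 2 by omega)
  have hpge : x (⟨k, by omega⟩ : Fin n) + x (⟨k+1, by omega⟩ : Fin n) ≤ p :=
    hpair_le _ _ P ha1 ha2 hane
  have hqge : x (⟨δ+1, by omega⟩ : Fin n) + x (⟨δ+2, by omega⟩ : Fin n) ≤ q :=
    hpair_le _ _ Q hb1 hb2 hbne
  have hmina : m ≤ x (⟨k, by omega⟩ : Fin n) := humin _ (by
    rw [hR, Finset.mem_filter]; exact ⟨Finset.mem_univ _, (le_rfl : k ≤ k)⟩)
  have hminb : m ≤ x (⟨δ+1, by omega⟩ : Fin n) := humin _ (by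
    rw [hR, Finset.mem_filter]; exact ⟨Finset.mem_univ _, (by omega : k ≤ δ+1)⟩)
  have hpm : m < p := by
    have := hxpos (⟨k+1, by omega⟩ : Fin n)
    linarith
  have hqm : m < q := by
    have := hxpos (⟨δ+2, by omega⟩ : Fin n)
    linarith
  -- conclude
  have hD : z ⬝ᵥ (adjMat Gk *ᵥ z) - x ⬝ᵥ (adjMat Gδ *ᵥ x) = 2 * ((p - m) * (q - m)) := by
    rw [hdiff, hsum1, hsum2, hsr]
    ring
  have hDpos : (0:ℝ) < 2 * ((p - m) * (q - m)) := by
    have := mul_pos (by linarith : (0:ℝ) < p - m) (by linarith : (0:ℝ) < q - m)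
    linarith
  calc specRad Gδ = x ⬝ᵥ (adjMat Gδ *ᵥ x) := hLδ
    _ < z ⬝ᵥ (adjMat Gk *ᵥ z) := by linarith
    _ ≤ specRad Gk := hzb

end Compare

section Structure
variable {G : SimpleGraph (Fin n)} {k : ℕ}

/-- A graph that is not complete has a missing edge. -/
lemma exists_nonadj_of_ne_top (h : G ≠ ⊤) : ∃ u v : Fin n, u ≠ v ∧ ¬ G.Adj u v := by
  by_contra hc
  push_neg at hc
  apply h
  ext u v
  rw [SimpleGraph.top_adj]
  exact ⟨fun h' => h'.ne, fun h' => hc u v h'⟩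

/-- From a disconnecting set, extract two nonempty sides with no edges in between. -/
lemma extract_sides {S0 : Finset (Fin n)} (hd : Disconnects G S0) :
    ∃ P0 Q0 : Finset (Fin n), Disjoint P0 Q0 ∧ P0.Nonempty ∧ Q0.Nonempty ∧
      P0.card + Q0.card = n - S0.card ∧ (∀ i ∈ P0, ∀ j ∈ Q0, ¬ G.Adj i j) := by
  classical
  rw [Disconnects, SimpleGraph.Preconnected] at hd
  push_neg at hd
  obtain ⟨a, b, hab⟩ := hd
  set P0 : Finset (Fin n) := S0ᶜ.filter
    (fun w => ∃ hw : w ∈ (↑(S0ᶜ) : Set (Fin n)),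
      (G.induce ((↑(S0ᶜ) : Set (Fin n)))).Reachable a ⟨w, hw⟩) with hP0
  set Q0 : Finset (Fin n) := S0ᶜ \ P0 with hQ0
  have hdisj : Disjoint P0 Q0 := Finset.disjoint_sdiff
  have hPsub : P0 ⊆ S0ᶜ := Finset.filter_subset _ _
  have haP : (a : Fin n) ∈ P0 := by
    rw [hP0, Finset.mem_filter]
    refine ⟨?_, a.2, ?_⟩
    · exact Finset.mem_coe.mp a.2
    · exact SimpleGraph.Reachable.refl _
  have hbQ : (b : Fin n) ∈ Q0 := by
    rw [hQ0, Finset.mem_sdiff]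
    refine ⟨Finset.mem_coe.mp b.2, ?_⟩
    intro hbP
    rw [hP0, Finset.mem_filter] at hbP
    obtain ⟨-, hw, hr⟩ := hbP
    exact hab (hr.trans (SimpleGraph.Reachable.refl _))
  have hcard : P0.card + Q0.card = n - S0.card := by
    rw [hQ0, Finset.card_sdiff_of_subset hPsub]
    have h1 : P0.card ≤ S0ᶜ.card := Finset.card_le_card hPsub
    have h2 : S0ᶜ.card = n - S0.card := by
      rw [Finset.card_compl, Fintype.card_fin]
    omega
  refine ⟨P0, Q0, hdisj, ⟨a, haP⟩, ⟨b, hbQ⟩, hcard, ?_⟩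
  intro i hi j hj hadj
  have hiC : i ∈ S0ᶜ := hPsub hi
  have hjC : j ∈ S0ᶜ := (Finset.mem_sdiff.mp hj).1
  have hjP : j ∈ P0 := by
    rw [hP0, Finset.mem_filter] at hi ⊢
    obtain ⟨-, hwi, hri⟩ := hi
    refine ⟨hjC, Finset.mem_coe.mpr hjC, ?_⟩
    refine hri.trans (SimpleGraph.Adj.reachable ?_)
    exact hadj
  exact (Finset.mem_sdiff.mp hj).2 hjP

/-- Balancing/padding of the two sides. -/
lemma pad_sides (hk : 1 ≤ k) (hkn : k + 2 ≤ n) (P0 Q0 : Finset (Fin n))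
    (hd : Disjoint P0 Q0) (hP0 : P0.Nonempty) (hQ0 : Q0.Nonempty)
    (hcard : n - k ≤ P0.card + Q0.card)
    (hadj : ∀ i ∈ P0, ∀ j ∈ Q0, ¬ G.Adj i j) :
    ∃ P Q : Finset (Fin n), Disjoint P Q ∧ P.Nonempty ∧ Q.Nonempty ∧
      P.card + Q.card = n - k ∧ P.card ≤ Q.card ∧ (∀ i ∈ P, ∀ j ∈ Q, ¬ G.Adj i j) := by
  have key : ∀ P1 Q1 : Finset (Fin n), Disjoint P1 Q1 → P1.Nonempty → Q1.Nonempty →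
      n - k ≤ P1.card + Q1.card → P1.card ≤ Q1.card → (∀ i ∈ P1, ∀ j ∈ Q1, ¬ G.Adj i j) →
      ∃ P Q : Finset (Fin n), Disjoint P Q ∧ P.Nonempty ∧ Q.Nonempty ∧
        P.card + Q.card = n - k ∧ P.card ≤ Q.card ∧ (∀ i ∈ P, ∀ j ∈ Q, ¬ G.Adj i j) := by
    intro P1 Q1 hd1 hP1 hQ1 hc1 hle1 hadj1
    have hp1 : 1 ≤ P1.card := Finset.card_pos.mpr hP1
    have hq1 : 1 ≤ Q1.card := Finset.card_pos.mpr hQ1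
    set p : ℕ := min P1.card ((n - k) / 2) with hp
    set q : ℕ := n - k - p with hq
    have hple : p ≤ P1.card := min_le_left _ _
    have hqle : q ≤ Q1.card := by omega
    obtain ⟨P, hPsub, hPcard⟩ := Finset.exists_subset_card_eq hple
    obtain ⟨Q, hQsub, hQcard⟩ := Finset.exists_subset_card_eq hqle
    refine ⟨P, Q, ?_, ?_, ?_, ?_, ?_, ?_⟩
    · exact Finset.disjoint_of_subset_left hPsub (Finset.disjoint_of_subset_right hQsub hd1)
    · rw [← Finset.card_pos, hPcard]; omega
    · rw [← Finset.card_pos, hQcard]; omega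
    · rw [hPcard, hQcard]; omega
    · rw [hPcard, hQcard]; omega
    · intro i hi j hj; exact hadj1 i (hPsub hi) j (hQsub hj)
  rcases le_total P0.card Q0.card with h | h
  · exact key P0 Q0 hd hP0 hQ0 hcard h hadj
  · exact key Q0 P0 hd.symm hQ0 hP0 (by omega) h
      (fun i hi j hj hij => hadj j hj i hi hij.symm)

end Structure

def relabel (G : SimpleGraph (Fin n)) (σ : Fin n ≃ Fin n) : SimpleGraph (Fin n) where
  Adj a b := G.Adj (σ a) (σ b)
  symm := ⟨fun a b h => h.symm⟩
  loopless := ⟨fun a h => G.loopless.irrefl _ h⟩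

def relabelIso (G : SimpleGraph (Fin n)) (σ : Fin n ≃ Fin n) : relabel G σ ≃g G :=
  { toEquiv := σ, map_rel_iff' := Iff.rfl }

theorem specRad_max_connectivity_at_most_k {n k : ℕ} (hk : 1 ≤ k)
    (hn : k + 2 ≤ n) (G : SimpleGraph (Fin n)) (hGconn : G.Connected)
    (hκ : ¬ IsKConnected G (k + 1)) (hne : ¬ Nonempty (G ≃g Gkdn k k n)) :
    specRad G < specRad (Gkdn k k n) := by
  have hn0 : 0 < n := by omega
  obtain ⟨hA, hB⟩ := not_or.mp hκ
  -- obtain the two sides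
  have hPQ : ∃ P Q : Finset (Fin n), Disjoint P Q ∧ P.Nonempty ∧ Q.Nonempty ∧
      P.card + Q.card = n - k ∧ P.card ≤ Q.card ∧ (∀ i ∈ P, ∀ j ∈ Q, ¬ G.Adj i j) := by
    rcases Nat.lt_or_ge n (k+3) with hsmall | hbig
    · have hn2 : n = k + 2 := by omega
      have hGtop : G ≠ ⊤ := fun hG => hA ⟨by omega, hG⟩
      obtain ⟨u, v, huv, hnadj⟩ := exists_nonadj_of_ne_top hGtop
      apply pad_sides hk hn ({u} : Finset (Fin n)) ({v} : Finset (Fin n))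
        (Finset.disjoint_singleton.mpr huv) ⟨u, Finset.mem_singleton_self u⟩
        ⟨v, Finset.mem_singleton_self v⟩
        (by rw [Finset.card_singleton, Finset.card_singleton]; omega)
      intro i hi j hj
      rw [Finset.mem_singleton] at hi hj
      subst hi; subst hj
      exact hnadj
    · rw [not_and] at hB
      have h2 := hB (by omega)
      push_neg at h2
      obtain ⟨S0, hS0card, hS0dis⟩ := h2
      have hS0card' : S0.card ≤ k := by omega
      obtain ⟨P0, Q0, hd0, hP0, hQ0, hc0, hadj0⟩ := extract_sides hS0dis
      exact pad_sides hk hn P0 Q0 hd0 hP0 hQ0 (by omega) hadj0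
  obtain ⟨P, Q, hdPQ, hPne, hQne, hcardPQ, hplq, hPQadj⟩ := hPQ
  -- the labelled partition
  set S : Finset (Fin n) := (P ∪ Q)ᶜ with hS
  have hp1 : 1 ≤ P.card := Finset.card_pos.mpr hPne
  have hq1 : 1 ≤ Q.card := Finset.card_pos.mpr hQne
  have hScard : S.card = k := by
    rw [hS, Finset.card_compl, Finset.card_union_of_disjoint hdPQ, Fintype.card_fin]
    omega
  set p : ℕ := P.card with hp
  have hQcard : Q.card = n - k - p := by omega
  set δ : ℕ := k + p - 1 with hδ
  have hpn : k + p ≤ n := by omega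
  -- the relabelling map
  set g : Fin n → Fin n := fun a =>
    if h1 : (a : ℕ) < k then (S.orderIsoOfFin hScard ⟨(a:ℕ), h1⟩ : Fin n)
    else if h2 : (a : ℕ) < k + p then
      (P.orderIsoOfFin rfl ⟨(a:ℕ) - k, by omega⟩ : Fin n)
    else (Q.orderIsoOfFin hQcard ⟨(a:ℕ) - (k + p), by omega⟩ : Fin n) with hg
  have hgS : ∀ a : Fin n, (a:ℕ) < k → g a ∈ S := by
    intro a h1
    simp only [hg]
    rw [dif_pos h1]
    exact Finset.coe_mem _
  have hgP : ∀ a : Fin n, ¬ (a:ℕ) < k → (a:ℕ) < k + p → g a ∈ P := by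
    intro a h1 h2
    simp only [hg]
    rw [dif_neg h1, dif_pos h2]
    exact Finset.coe_mem _
  have hgQ : ∀ a : Fin n, ¬ (a:ℕ) < k → ¬ (a:ℕ) < k + p → g a ∈ Q := by
    intro a h1 h2
    simp only [hg]
    rw [dif_neg h1, dif_neg h2]
    exact Finset.coe_mem _
  have hSP : ∀ w, w ∈ S → w ∈ P → False := by
    intro w hw hw'
    exact (Finset.mem_compl.mp (hS ▸ hw)) (Finset.mem_union_left _ hw')
  have hSQ : ∀ w, w ∈ S → w ∈ Q → False := by
    intro w hw hw'
    exact (Finset.mem_compl.mp (hS ▸ hw)) (Finset.mem_union_right _ hw')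
  have hPQd : ∀ w, w ∈ P → w ∈ Q → False := fun w hw hw' =>
    Finset.disjoint_left.mp hdPQ hw hw'
  have hginj : Function.Injective g := by
    intro a b hab
    by_cases ha1 : (a:ℕ) < k <;> by_cases hb1 : (b:ℕ) < k
    · -- both in S zone
      simp only [hg] at hab
      rw [dif_pos ha1, dif_pos hb1] at hab
      have h3 := congrArg Fin.val
        ((S.orderIsoOfFin hScard).injective (Subtype.coe_injective hab))
      exact Fin.ext h3
    · exfalso
      have m1 : g a ∈ S := hgS a ha1
      rw [hab] at m1
      by_cases hb2 : (b:ℕ) < k + p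
      · exact hSP _ m1 (hgP b hb1 hb2)
      · exact hSQ _ m1 (hgQ b hb1 hb2)
    · exfalso
      have m1 : g b ∈ S := hgS b hb1
      rw [← hab] at m1
      by_cases ha2 : (a:ℕ) < k + p
      · exact hSP _ m1 (hgP a ha1 ha2)
      · exact hSQ _ m1 (hgQ a ha1 ha2)
    · by_cases ha2 : (a:ℕ) < k + p <;> by_cases hb2 : (b:ℕ) < k + p
      · -- both in P zone
        simp only [hg] at hab
        rw [dif_neg ha1, dif_pos ha2, dif_neg hb1, dif_pos hb2] at hab
        have h3 := congrArg Fin.val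
          ((P.orderIsoOfFin rfl).injective (Subtype.coe_injective hab))
        simp only at h3
        exact Fin.ext (by omega)
      · exfalso
        have m1 : g a ∈ P := hgP a ha1 ha2
        rw [hab] at m1
        exact hPQd _ m1 (hgQ b hb1 hb2)
      · exfalso
        have m1 : g b ∈ P := hgP b hb1 hb2
        rw [← hab] at m1
        exact hPQd _ m1 (hgQ a ha1 ha2)
      · -- both in Q zone
        simp only [hg] at hab
        rw [dif_neg ha1, dif_neg ha2, dif_neg hb1, dif_neg hb2] at hab
        have h3 := congrArg Fin.val
          ((Q.orderIsoOfFin hQcard).injective (Subtype.coe_injective hab))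
        simp only at h3
        exact Fin.ext (by omega)
  set σg : Fin n ≃ Fin n := Equiv.ofBijective g (Finite.injective_iff_bijective.mp hginj)
    with hσg
  set H : SimpleGraph (Fin n) := relabel G σg with hH
  have hiso : H ≃g G := relabelIso G σg
  have hadj_g : ∀ a b : Fin n, H.Adj a b ↔ G.Adj (g a) (g b) := fun a b => Iff.rfl
  have hHle : ∀ a b : Fin n, H.Adj a b → (Gkdn k δ n).Adj a b := by
    intro a b hab
    have hab' : G.Adj (g a) (g b) := (hadj_g a b).mp hab
    have hne' : a ≠ b := by
      intro h
      subst h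
      exact G.loopless.irrefl _ hab'
    by_contra hc
    rw [Gkdn_not_adj_iff (show k ≤ δ by omega) hne'] at hc
    rcases hc with ⟨⟨h1, h2⟩, h3⟩ | ⟨h3, h1, h2⟩
    · exact hPQadj _ (hgP a (by omega) (by omega)) _ (hgQ b (by omega) (by omega)) hab'
    · exact hPQadj _ (hgP b (by omega) (by omega)) _ (hgQ a (by omega) (by omega)) hab'.symm
  by_cases hp2 : p = 1
  · have hδk : δ = k := by omega
    have hGG : Gkdn k δ n = Gkdn k k n := by rw [hδk]
    have hHle' : ∀ a b : Fin n, H.Adj a b → (Gkdn k k n).Adj a b := by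
      intro a b hab
      exact hGG ▸ hHle a b hab
    have hnet : H ≠ Gkdn k k n := by
      intro he
      exact hne ⟨he ▸ hiso.symm⟩
    obtain ⟨aa, bb, hadj', hnadj'⟩ : ∃ a b, (Gkdn k k n).Adj a b ∧ ¬ H.Adj a b := by
      by_contra hcc
      push_neg at hcc
      apply hnet
      apply le_antisymm
      · intro a b hab; exact hHle' a b hab
      · intro a b hab; exact hcc a b hab
    calc specRad G = specRad H := (specRad_iso hiso).symm
      _ < specRad (Gkdn k k n) :=
        specRad_lt_of_lt hn0 (Gkdn_connected hk hn0) hHle' aa bb hadj' hnadj'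
  · have hkδ : k < δ := by omega
    have hδ3 : δ + 3 ≤ n := by omega
    calc specRad G = specRad H := (specRad_iso hiso).symm
      _ ≤ specRad (Gkdn k δ n) := specRad_le_of_le hn0 hHle
      _ < specRad (Gkdn k k n) := compare_lemma hk hkδ hδ3
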